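/- arXiv:math/0206106 — 4 statements merged into one kernel-verified Lean document; each statement's English description precedes it below -/
import Mathlib

section
/- Let X be an infinite-dimensional real Banach space and let D be a countably incomplete ultrafilter on a set I. Then the canonical embedding d_X : X → (X)_D is not surjective, i.e. (X)_D \ d_X(X) ≠ ∅. -/
open Cardinal Filter
open scoped ENNReal

universe u v

noncomputable section

instance : Fact ((1 : ℝ≥0∞) ≤ ∞) := ⟨le_top⟩

/-- `dim X`: the least cardinality of a subset of `X` whose closed linear span is all of `X`. -/
def spanDim (X : Type*) [SeminormedAddCommGroup X] [NormedSpace ℝ X] : Cardinal :=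
  sInf {c : Cardinal | ∃ s : Set X,
    closure (Submodule.span ℝ s : Set X) = Set.univ ∧ Cardinal.mk s = c}

/-- The subspace `N_D` of `ℓ_∞(I, X)` of families whose norms tend to `0` along the
ultrafilter `D`. -/
def ultraNull {I : Type*} (D : Ultrafilter I) (X : Type*)
    [NormedAddCommGroup X] [NormedSpace ℝ X] :
    Submodule ℝ (lp (fun _ : I => X) ∞) where
  carrier := {f | Tendsto (fun i => ‖f i‖) (D : Filter I) (nhds 0)}
  zero_mem' := by
    simp only [Set.mem_setOf_eq, lp.coeFn_zero, Pi.zero_apply, norm_zero]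
    exact tendsto_const_nhds
  add_mem' := by
    intro f g hf hg
    have h : Tendsto (fun i => ‖f i‖ + ‖g i‖) (D : Filter I) (nhds 0) := by
      simpa using hf.add hg
    exact squeeze_zero (fun i => norm_nonneg _) (fun i => norm_add_le _ _) h
  smul_mem' := by
    intro c f hf
    have h : Tendsto (fun i => ‖c‖ * ‖f i‖) (D : Filter I) (nhds 0) := by
      simpa using hf.const_mul ‖c‖
    refine squeeze_zero (fun i => norm_nonneg _) (fun i => ?_) h
    simp [norm_smul]

/-- The ultrapower `(X)_D` of a Banach space `X` by an ultrafilter `D`: the quotient of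
`ℓ_∞(I, X)` by the subspace of families with `lim_D ‖x_i‖ = 0`. -/
abbrev Ultrapower {I : Type*} (D : Ultrafilter I) (X : Type*)
    [NormedAddCommGroup X] [NormedSpace ℝ X] : Type _ :=
  (lp (fun _ : I => X) ∞) ⧸ ultraNull D X

/-- The canonical (diagonal) embedding `d_X : X → (X)_D`. -/
def canonicalEmbedding {I : Type*} (D : Ultrafilter I) (X : Type*)
    [NormedAddCommGroup X] [NormedSpace ℝ X] : X → Ultrapower D X := fun x =>
  Submodule.Quotient.mk
    (⟨fun _ => x, memℓp_infty ⟨‖x‖, by rintro - ⟨i, rfl⟩; simp⟩⟩ : lp (fun _ : I => X) ∞)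

/-- An ultrafilter `D` is `κ`-complete if every subfamily `G ⊆ D` with `card G < κ`
satisfies `⋂₀ G ∈ D`. -/
def UltrafilterComplete {I : Type u} (D : Ultrafilter I) (κ : Cardinal.{v}) : Prop :=
  ∀ G : Set (Set I), (∀ A ∈ G, A ∈ D) →
    Cardinal.lift.{v} (Cardinal.mk G) < Cardinal.lift.{u} κ → ⋂₀ G ∈ D

/-- An ultrafilter is countably incomplete if it is not `ω₁`-complete. -/
def CountablyIncomplete {I : Type*} (D : Ultrafilter I) : Prop :=
  ¬ UltrafilterComplete D (Cardinal.aleph.{0} 1)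

open Topology

/-! A countably incomplete ultrafilter yields `m : I → ℕ` with `m → ∞` along `D`. Composing it
with a `1`-separated bounded sequence `x` (Riesz's lemma) gives a bounded family `x ∘ m`. If its
class were `d_X y`, then `x (m i) → y` along `D`, so `x (m i)` would stay within `1/2` of `y` on
a `D`-large set; by separation `m` is constant there, contradicting `m → ∞`. -/

theorem CountablyIncomplete.exists_iInter_eq_empty {I : Type*} {D : Ultrafilter I}
    (hD : CountablyIncomplete D) : ∃ B : ℕ → Set I, (∀ n, B n ∈ D) ∧ ⋂ n, B n = ∅ := by
  simp only [CountablyIncomplete, UltrafilterComplete, not_forall, exists_prop] at hD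
  obtain ⟨G, hGD, hGcard, hGnot⟩ := hD
  rw [Cardinal.lift_uzero, Cardinal.lift_aleph, Ordinal.lift_one,
    Cardinal.lt_aleph_one_iff, Cardinal.le_aleph0_iff_set_countable] at hGcard
  have hGne : G.Nonempty :=
    Set.nonempty_iff_ne_empty.2 fun h => hGnot (by rw [h, Set.sInter_empty]; exact univ_mem)
  obtain ⟨A, rfl⟩ := hGcard.exists_eq_range hGne
  refine ⟨fun n => A n \ ⋂₀ Set.range A, fun n => ?_, ?_⟩
  · exact sdiff_mem (hGD _ ⟨n, rfl⟩) (Ultrafilter.compl_mem_iff_notMem.2 hGnot)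
  · refine Set.eq_empty_of_forall_notMem fun i hi => ?_
    rw [Set.mem_iInter] at hi
    exact (hi 0).2 (Set.mem_sInter.2 fun _ ⟨n, hn⟩ => hn ▸ (hi n).1)

theorem Filter.exists_tendsto_atTop_of_iInter_eq_empty {α : Type*} {l : Filter α}
    {B : ℕ → Set α} (hBl : ∀ n, B n ∈ l) (hB : ⋂ n, B n = ∅) :
    ∃ m : α → ℕ, Tendsto m l atTop := by
  classical
  have hex : ∀ a, ∃ n, a ∉ B n := fun a => by
    simpa using (Set.eq_empty_iff_forall_notMem.1 hB a)
  refine ⟨fun a => Nat.find (hex a), tendsto_atTop.2 fun N => ?_⟩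
  filter_upwards [(biInter_mem (Set.finite_Iic N)).2 fun k _ => hBl k] with a ha
  simp only [Set.mem_iInter] at ha
  exact (Nat.lt_find_iff _ _).2 (fun k hk => not_not.2 (ha k hk)) |>.le

theorem not_tendsto_comp_of_pairwise_le_dist {α ι X : Type*} [PseudoMetricSpace X]
    {l : Filter α} [l.NeBot] {m : α → ι} (hm : Tendsto m l cofinite) {x : ι → X} {ε : ℝ}
    (hε : 0 < ε) (hx : Pairwise fun n k => ε ≤ dist (x n) (x k)) (y : X) :
    ¬ Tendsto (x ∘ m) l (𝓝 y) := by
  intro hy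
  have hnear : ∀ᶠ a in l, dist (x (m a)) y < ε / 2 :=
    hy.eventually (Metric.ball_mem_nhds y (by positivity))
  obtain ⟨a₀, ha₀⟩ := hnear.exists
  obtain ⟨a, ha, hne⟩ := (hnear.and (hm.eventually (eventually_cofinite_ne (m a₀)))).exists
  have hsep := hx hne
  have htri := dist_triangle_right (x (m a)) (x (m a₀)) y
  linarith

theorem canonicalEmbedding_eq_mk_iff {I : Type*} {D : Ultrafilter I} {X : Type*}
    [NormedAddCommGroup X] [NormedSpace ℝ X] (y : X) (f : lp (fun _ : I => X) ∞) :
    canonicalEmbedding D X y = Submodule.Quotient.mk f ↔ Tendsto (⇑f) D (𝓝 y) := by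
  rw [canonicalEmbedding, Submodule.Quotient.eq, tendsto_iff_norm_sub_tendsto_zero]
  change Tendsto _ _ _ ↔ _
  simp only [lp.coeFn_sub, Pi.sub_apply, norm_sub_rev y]

theorem canonicalEmbedding_not_surjective_of_countablyIncomplete_general
    (X : Type*) [NormedAddCommGroup X] [NormedSpace ℝ X]
    (hinf : ¬ FiniteDimensional ℝ X)
    {I : Type*} (D : Ultrafilter I) (hD : CountablyIncomplete D) :
    ¬ Function.Surjective (canonicalEmbedding D X) := by
  obtain ⟨B, hBD, hB⟩ := hD.exists_iInter_eq_empty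
  obtain ⟨m, hm⟩ := Filter.exists_tendsto_atTop_of_iInter_eq_empty hBD hB
  obtain ⟨R, x, -, hxR, hx⟩ := exists_seq_norm_le_one_le_norm_sub hinf
  let f : lp (fun _ : I => X) ∞ := ⟨x ∘ m, memℓp_infty ⟨R, by rintro - ⟨i, rfl⟩; exact hxR (m i)⟩⟩
  intro hsurj
  obtain ⟨y, hy⟩ := hsurj (Submodule.Quotient.mk f)
  rw [← Nat.cofinite_eq_atTop] at hm
  exact not_tendsto_comp_of_pairwise_le_dist hm one_pos
    (hx.mono fun _ _ h => by rwa [dist_eq_norm]) y ((canonicalEmbedding_eq_mk_iff y f).1 hy)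

/-- For an infinite-dimensional Banach space `X` and a countably incomplete ultrafilter
`D`, the canonical embedding `d_X : X → (X)_D` is not surjective. -/
theorem canonicalEmbedding_not_surjective_of_countablyIncomplete
    (X : Type*) [NormedAddCommGroup X] [NormedSpace ℝ X] [CompleteSpace X]
    (hinf : ¬ FiniteDimensional ℝ X)
    {I : Type*} (D : Ultrafilter I) (hD : CountablyIncomplete D) :
    ¬ Function.Surjective (canonicalEmbedding D X) :=
  canonicalEmbedding_not_surjective_of_countablyIncomplete_general X hinf D hD
end
end

section
/- Let X be an infinite-dimensional real Banach space with dim(X) = κ, let τ be an infinite cardinal, and let D be a τ-regular ultrafilter on a set I with card(I) = τ. Then dim((X)_D) = κ^τ. -/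
open Cardinal Filter
open scoped ENNReal

universe u v

noncomputable section

/-- An ultrafilter `D` on `I` is `τ`-regular if there is a subfamily `G ⊆ D` of
cardinality `τ` such that every `i ∈ I` belongs to only finitely many members of `G`. -/
def IsRegularUltrafilter {I : Type u} (D : Ultrafilter I) (τ : Cardinal.{u}) : Prop :=
  ∃ G : Set (Set I), (∀ A ∈ G, A ∈ D) ∧ Cardinal.mk G = τ ∧
    ∀ i : I, {A ∈ G | i ∈ A}.Finite

/-!
Upper bound: spans of finite sets are separable, so `X` has a dense subset of size `κ`;
every point is a limit of a sequence from it, so `#X ≤ κ ^ ℵ₀` and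
`dim (X)_D ≤ #(X ^ I) ≤ (κ ^ ℵ₀) ^ τ = κ ^ τ`.

Lower bound: by Riesz's lemma a maximal `1/2`-separated subset `T` of the unit sphere has
dense span, so `κ ≤ #T`. Regularity gives `G ⊆ D` of size `τ` with every `i` in finitely
many `A ∈ G`. Coding the restriction of `f : G → T` to `{A | i ∈ A}` by a point of `T`
yields `#T ^ τ` families `I → T`, any two of which differ on some `A ∈ D`: a
`1/2`-separated subset of `(X)_D` of size at least `κ ^ τ`. So every dense subset of
`(X)_D` has at least `κ ^ τ` points, while some dense subset has `ℵ₀ + dim (X)_D`.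
-/

open Metric Set

theorem Cardinal.mk_finset_le_max (α : Type*) : #(Finset α) ≤ max ℵ₀ #α := by
  classical
  exact (mk_le_of_surjective List.toFinset_surjective).trans (mk_list_le_max α)

theorem Dense.mk_le_mk_pow_aleph0 {Z : Type u} [TopologicalSpace Z] [FrechetUrysohnSpace Z]
    [T2Space Z] {t : Set Z} (ht : Dense t) : #Z ≤ #t ^ ℵ₀ := by
  have (x : Z) : ∃ v : ℕ → t, Tendsto (fun n => (v n : Z)) atTop (nhds x) := by
    obtain ⟨v, hvt, hv⟩ := mem_closure_iff_seq_limit.mp (ht x)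
    exact ⟨fun n => ⟨v n, hvt n⟩, hv⟩
  choose v hv using this
  calc #Z ≤ #(ℕ → t) :=
        mk_le_of_injective (f := v) fun x y hxy =>
          tendsto_nhds_unique (hv x) (by rw [hxy]; exact hv y)
    _ = #t ^ ℵ₀ := by simp

theorem Dense.mk_le_of_pairwise_le_dist {Z α : Type u} [PseudoMetricSpace Z] {t : Set Z}
    (ht : Dense t) {f : α → Z} {δ : ℝ} (hδ : 0 < δ)
    (hf : Pairwise fun a b => δ ≤ dist (f a) (f b)) : #α ≤ #t := by
  have (a : α) : ∃ y : t, dist (f a) y < δ / 2 := by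
    obtain ⟨y, hyt, hy⟩ := Metric.mem_closure_iff.mp (ht (f a)) (δ / 2) (half_pos hδ)
    exact ⟨⟨y, hyt⟩, hy⟩
  choose c hc using this
  refine mk_le_of_injective (f := c) fun a b hab => by_contra fun hne => ?_
  have ha := hc a
  rw [hab] at ha
  linarith [hf hne, hc b, dist_triangle_right (f a) (f b) (c b)]

theorem exists_span_subset_closure_mk_le (R : Type*) {M : Type u} [Semiring R]
    [TopologicalSpace R] [TopologicalSpace.SeparableSpace R] [AddCommMonoid M] [Module R M]
    [TopologicalSpace M] [ContinuousAdd M] [ContinuousSMul R M] (s : Set M) :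
    ∃ t : Set M, (Submodule.span R s : Set M) ⊆ closure t ∧ #t ≤ ℵ₀ ⊔ #s := by
  classical
  have (F : Finset s) :
      TopologicalSpace.IsSeparable (Submodule.span R (Subtype.val '' (F : Set s)) : Set M) :=
    ((F.finite_toSet.image _).isSeparable).span
  choose c hc_countable hc using this
  refine ⟨⋃ F, c F, fun x hx => ?_, ?_⟩
  · obtain ⟨F, hFs, hxF⟩ := Submodule.mem_span_finite_of_mem_span hx
    have hF : (F : Set M) ⊆ Subtype.val '' ((F.subtype (· ∈ s) : Finset s) : Set s) :=
      fun y hy => ⟨⟨y, hFs hy⟩, Finset.mem_subtype.2 hy, rfl⟩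
    exact closure_mono (subset_iUnion c _) (hc _ (Submodule.span_mono hF hxF))
  · calc #(⋃ F, c F) ≤ #(Finset s) * ⨆ F, #(c F) := mk_iUnion_le c
      _ ≤ (ℵ₀ ⊔ #s) * ℵ₀ :=
          mul_le_mul' (mk_finset_le_max s) (ciSup_le' fun F => (hc_countable F).le_aleph0)
      _ = ℵ₀ ⊔ #s := mul_aleph0_eq le_sup_left

section SpanDim

variable {Y : Type u} [SeminormedAddCommGroup Y] [NormedSpace ℝ Y]

theorem spanDim_le_mk : spanDim Y ≤ #Y :=
  csInf_le' ⟨Set.univ, by simp, mk_univ⟩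

theorem exists_closure_span_eq_univ_mk_eq_spanDim :
    ∃ s : Set Y, closure (Submodule.span ℝ s : Set Y) = Set.univ ∧ #s = spanDim Y :=
  csInf_mem (s := {c : Cardinal | ∃ s : Set Y,
    closure (Submodule.span ℝ s : Set Y) = Set.univ ∧ #s = c})
    ⟨#Y, Set.univ, by simp, mk_univ⟩

theorem exists_dense_mk_le_spanDim : ∃ t : Set Y, Dense t ∧ #t ≤ ℵ₀ ⊔ spanDim Y := by
  obtain ⟨s, hs, hsY⟩ := exists_closure_span_eq_univ_mk_eq_spanDim (Y := Y)
  obtain ⟨t, hst, ht⟩ := exists_span_subset_closure_mk_le ℝ s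
  exact ⟨t, dense_iff_closure_eq.2 (eq_univ_of_univ_subset
    (hs ▸ closure_minimal hst isClosed_closure)), hsY ▸ ht⟩

end SpanDim

section NormedSpace

variable {Y : Type u} [NormedAddCommGroup Y] [NormedSpace ℝ Y]

theorem aleph0_le_spanDim (h : ¬ FiniteDimensional ℝ Y) : ℵ₀ ≤ spanDim Y := by
  obtain ⟨s, hs, hsY⟩ := exists_closure_span_eq_univ_mk_eq_spanDim (Y := Y)
  rw [← hsY]
  by_contra hlt
  have hfin : s.Finite := lt_aleph0_iff_set_finite.1 (not_le.1 hlt)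
  have : FiniteDimensional ℝ (Submodule.span ℝ s) := FiniteDimensional.span_of_finite ℝ hfin
  have htop : Submodule.span ℝ s = ⊤ := by
    rw [← Submodule.coe_eq_univ, ← (Submodule.closed_of_finiteDimensional _).closure_eq, hs]
  exact h (Module.Finite.equiv (LinearEquiv.ofTop _ htop))

theorem mk_le_spanDim_pow_aleph0 (h : ℵ₀ ≤ spanDim Y) : #Y ≤ spanDim Y ^ ℵ₀ := by
  obtain ⟨t, ht, htY⟩ := exists_dense_mk_le_spanDim (Y := Y)
  calc #Y ≤ #t ^ ℵ₀ := ht.mk_le_mk_pow_aleph0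
    _ ≤ spanDim Y ^ ℵ₀ := power_le_power_right (sup_eq_right.2 h ▸ htY)

theorem exists_subset_sphere_pairwise_le_dist_spanDim_le {ε : ℝ} (hε : ε < 1) :
    ∃ T ⊆ sphere (0 : Y) 1, T.Pairwise (fun x y => ε ≤ dist x y) ∧ spanDim Y ≤ #T := by
  obtain ⟨T, ⟨hT1, hTsep⟩, hTmax⟩ := zorn_subset
    {T : Set Y | T ⊆ sphere 0 1 ∧ T.Pairwise fun x y => ε ≤ dist x y} fun c hc hchain =>
      ⟨⋃₀ c, ⟨sUnion_subset fun T hT => (hc hT).1,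
        hchain.pairwise_sUnion.2 fun T hT => (hc hT).2⟩, fun _ => subset_sUnion_of_mem⟩
  refine ⟨T, hT1, hTsep, csInf_le' ⟨T, ?_, rfl⟩⟩
  by_contra hT
  obtain ⟨x, hx⟩ := (ne_univ_iff_exists_notMem _).1 hT
  set F := (Submodule.span ℝ T).topologicalClosure
  have hTF : T ⊆ F := fun y hy =>
    (Submodule.span ℝ T).le_topologicalClosure (Submodule.subset_span hy)
  obtain ⟨x₀, hx₀F, hx₀, hx₀_far⟩ :=
    riesz_lemma_of_lt_one (Submodule.isClosed_topologicalClosure _) ⟨x, hx⟩ hε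
  have hsep : (insert x₀ T).Pairwise fun x y => ε ≤ dist x y :=
    hTsep.insert fun y hy _ => by
      have := hx₀_far y (hTF hy)
      rw [← dist_eq_norm] at this
      exact ⟨this, dist_comm x₀ y ▸ this⟩
  have hx₀T := hTmax ⟨insert_subset (mem_sphere_zero_iff_norm.2 hx₀) hT1, hsep⟩
    (subset_insert x₀ T) (mem_insert x₀ T)
  exact hx₀F (hTF hx₀T)

end NormedSpace

section Ultrapower

variable {I : Type*} {D : Ultrafilter I} {X : Type*} [NormedAddCommGroup X] [NormedSpace ℝ X]

theorem Ultrapower.le_norm_mk {w : lp (fun _ : I => X) ∞} {δ : ℝ}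
    (hw : ∀ᶠ i in (D : Filter I), δ ≤ ‖w i‖) :
    δ ≤ ‖(Submodule.Quotient.mk w : Ultrapower D X)‖ := by
  refine QuotientAddGroup.le_norm_iff.2 fun v hv => ?_
  have hvw : Tendsto (fun i => ‖(v - w) i‖) (D : Filter I) (nhds 0) :=
    (Submodule.Quotient.eq (ultraNull D X)).1 hv
  refine le_of_tendsto (by simpa using (tendsto_const_nhds (x := δ)).sub hvw) ?_
  filter_upwards [hw] with i hi
  have := norm_sub_norm_le (w i) (v i)
  rw [norm_sub_rev] at this
  calc δ - ‖(v - w) i‖ ≤ ‖v i‖ := by simp only [lp.coeFn_sub, Pi.sub_apply]; linarith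
    _ ≤ ‖v‖ := lp.norm_apply_le_norm ENNReal.top_ne_zero v i

theorem Ultrapower.le_dist_mk {v w : lp (fun _ : I => X) ∞} {δ : ℝ}
    (h : ∀ᶠ i in (D : Filter I), δ ≤ dist (v i) (w i)) :
    δ ≤ dist (Submodule.Quotient.mk v : Ultrapower D X) (Submodule.Quotient.mk w) := by
  rw [dist_eq_norm, ← Submodule.Quotient.mk_sub]
  exact le_norm_mk (by simpa [dist_eq_norm] using h)

end Ultrapower

theorem mk_ultrapower_le {I X : Type u} (D : Ultrafilter I) [NormedAddCommGroup X]
    [NormedSpace ℝ X] : #(Ultrapower D X) ≤ #X ^ #I :=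
  calc #(Ultrapower D X) ≤ #(lp (fun _ : I => X) ∞) :=
        mk_le_of_surjective (Submodule.Quotient.mk_surjective _)
    _ ≤ #(I → X) := mk_le_of_injective Subtype.val_injective
    _ = #X ^ #I := (power_def X I).symm

theorem spanDim_ultrapower_le {I X : Type u} (D : Ultrafilter I) [NormedAddCommGroup X]
    [NormedSpace ℝ X] (hI : ℵ₀ ≤ #I) (hX : ℵ₀ ≤ spanDim X) :
    spanDim (Ultrapower D X) ≤ spanDim X ^ #I :=
  calc spanDim (Ultrapower D X) ≤ #(Ultrapower D X) := spanDim_le_mk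
    _ ≤ #X ^ #I := mk_ultrapower_le D
    _ ≤ (spanDim X ^ ℵ₀) ^ #I := power_le_power_right (mk_le_spanDim_pow_aleph0 hX)
    _ = spanDim X ^ #I := by rw [← power_mul, aleph0_mul_eq hI]

namespace IsRegularUltrafilter

variable {I : Type u} {D : Ultrafilter I} {τ : Cardinal.{u}}

theorem exists_pairwise_eventually_ne (hD : IsRegularUltrafilter D τ) {T : Type u}
    (hT : ℵ₀ ≤ #T) : ∃ (S : Type u) (φ : (S → T) → I → T), #S = τ ∧
      Pairwise fun f g => ∀ᶠ i in (D : Filter I), φ f i ≠ φ g i := by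
  obtain ⟨G, hGD, hGτ, hGfin⟩ := hD
  have hcode (i : I) : Nonempty (({A : G | i ∈ (A : Set I)} → T) ↪ T) := by
    have : Finite {A : G | i ∈ (A : Set I)} :=
      (((hGfin i).preimage Subtype.val_injective.injOn).subset fun A hA => ⟨A.2, hA⟩).to_subtype
    obtain ⟨n, hn⟩ := lt_aleph0.1 (lt_aleph0_of_finite {A : G | i ∈ (A : Set I)})
    rw [← Cardinal.le_def, ← power_def, hn]
    exact power_nat_le hT
  let e (i : I) := (hcode i).some
  refine ⟨G, fun f i => e i fun A => f A.1, hGτ, fun f g hfg => ?_⟩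
  obtain ⟨A, hA⟩ := Function.ne_iff.1 hfg
  filter_upwards [hGD A A.2] with i hi
  exact fun h => hA (congrFun ((e i).injective h) ⟨A, hi⟩)

variable {X : Type u} [NormedAddCommGroup X] [NormedSpace ℝ X]

theorem exists_pairwise_le_dist_ultrapower (hD : IsRegularUltrafilter D τ) {T : Set X}
    (hTb : Bornology.IsBounded T) (hT : ℵ₀ ≤ #T) {ε : ℝ}
    (hTsep : T.Pairwise fun x y => ε ≤ dist x y) :
    ∃ (S : Type u) (ψ : (S → T) → Ultrapower D X), #S = τ ∧
      Pairwise fun f g => ε ≤ dist (ψ f) (ψ g) := by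
  obtain ⟨S, φ, hS, hφ⟩ := hD.exists_pairwise_eventually_ne hT
  obtain ⟨C, hC⟩ := hTb.exists_norm_le
  have hbdd (f : S → T) : Memℓp (fun i => (φ f i : X)) ∞ :=
    memℓp_infty ⟨C, by rintro _ ⟨i, rfl⟩; exact hC _ (φ f i).2⟩
  refine ⟨S, fun f => Submodule.Quotient.mk ⟨_, hbdd f⟩, hS, fun f g hfg => ?_⟩
  refine Ultrapower.le_dist_mk ?_
  filter_upwards [hφ hfg] with i hi
  exact hTsep (φ f i).2 (φ g i).2 (Subtype.coe_injective.ne hi)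

theorem pow_le_spanDim_ultrapower (hD : IsRegularUltrafilter D τ) (hτ : ℵ₀ ≤ τ)
    (hX : ℵ₀ ≤ spanDim X) : spanDim X ^ τ ≤ spanDim (Ultrapower D X) := by
  obtain ⟨T, hT1, hTsep, hXT⟩ :=
    exists_subset_sphere_pairwise_le_dist_spanDim_le (Y := X) (by norm_num : (1 / 2 : ℝ) < 1)
  obtain ⟨S, ψ, hS, hψ⟩ :=
    hD.exists_pairwise_le_dist_ultrapower (isBounded_sphere.subset hT1) (hX.trans hXT) hTsep
  obtain ⟨t, ht, htU⟩ := exists_dense_mk_le_spanDim (Y := Ultrapower D X)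
  have hlt : ℵ₀ < spanDim X ^ τ :=
    hτ.trans_lt ((cantor τ).trans_le (power_le_power_right (ofNat_le_aleph0.trans hX)))
  have : spanDim X ^ τ ≤ ℵ₀ ⊔ spanDim (Ultrapower D X) :=
    calc spanDim X ^ τ ≤ #T ^ #S := hS ▸ power_le_power_right hXT
      _ = #(S → T) := power_def _ _
      _ ≤ #t := ht.mk_le_of_pairwise_le_dist (by norm_num) hψ
      _ ≤ ℵ₀ ⊔ spanDim (Ultrapower D X) := htU
  exact (le_sup_iff.1 this).resolve_left hlt.not_ge

end IsRegularUltrafilter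

theorem spanDim_ultrapower_of_regular_general
    (X : Type u) [NormedAddCommGroup X] [NormedSpace ℝ X]
    (hinf : ¬ FiniteDimensional ℝ X)
    (κ : Cardinal.{u}) (hκ : spanDim X = κ)
    (τ : Cardinal.{u}) (hτ : Cardinal.aleph0 ≤ τ)
    (I : Type u) (hI : Cardinal.mk I = τ)
    (D : Ultrafilter I) (hD : IsRegularUltrafilter D τ) :
    spanDim (Ultrapower D X) = κ ^ τ := by
  subst hκ hI
  have hX := aleph0_le_spanDim hinf
  exact (spanDim_ultrapower_le D hτ hX).antisymm (hD.pow_le_spanDim_ultrapower hτ hX)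

/-- If `X` is an infinite-dimensional Banach space with `dim X = κ` and `D` is a
`τ`-regular ultrafilter on a set `I` of cardinality `τ`, then `dim (X)_D = κ ^ τ`. -/
theorem spanDim_ultrapower_of_regular
    (X : Type u) [NormedAddCommGroup X] [NormedSpace ℝ X] [CompleteSpace X]
    (hinf : ¬ FiniteDimensional ℝ X)
    (κ : Cardinal.{u}) (hκ : spanDim X = κ)
    (τ : Cardinal.{u}) (hτ : Cardinal.aleph0 ≤ τ)
    (I : Type u) (hI : Cardinal.mk I = τ)
    (D : Ultrafilter I) (hD : IsRegularUltrafilter D τ) :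
    spanDim (Ultrapower D X) = κ ^ τ :=
  spanDim_ultrapower_of_regular_general X hinf κ hκ τ hτ I hI D hD
end
end

section
/- For every infinite-dimensional real Banach space X and every countably incomplete ultrafilter D, the dimension of the ultrapower satisfies dim((X)_D) = (dim((X)_D))^ω, i.e. dim((X)_D) raised to the countable power equals itself. -/
open Cardinal Filter
open scoped ENNReal

universe u v

noncomputable section

/-! Let `λ = dim (X)_D`. A maximal `1`-separated subset `T` of `(X)_D` is a `1`-net, so by
rescaling its span is dense and `λ ≤ |T|`; rational combinations of a spanning set give a dense
subset of cardinality `max λ ℵ₀`, which bounds the cardinality of every separated subset.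

Countable incompleteness gives `N : I → ℕ` tending to infinity along `D`. As `X` is
infinite-dimensional, Riesz's lemma makes a maximal `1/2`-separated subset `S` of its unit sphere
an infinite set with dense span, so `dens Xⁿ ≤ |S|`, and nearest points in a small dense subset
of `Xⁿ` give maps `cₙ : Xⁿ → S` that do not identify points `1/2` apart. With representatives
`f t ∈ ℓ_∞(I, X)` of the `t ∈ T`, the family `i ↦ c_{N i} (f t₀ i, …, f t_{N i - 1} i)` codes a
whole sequence `(tₘ) ∈ T^ℕ`, and distinct sequences give points `1/2` apart in `(X)_D`. Hence
`λ ^ ℵ₀ ≤ max λ ℵ₀`, which forces `λ = λ ^ ℵ₀`. -/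

open Metric Set Submodule
open scoped NNReal

namespace Metric

variable {α : Type*}

theorem exists_maximal_isSeparated [PseudoEMetricSpace α] (ε : ℝ≥0∞) (s : Set α) :
    ∃ N, Maximal (fun N => N ⊆ s ∧ IsSeparated ε N) N :=
  zorn_subset _ fun c hcs hc =>
    ⟨⋃₀ c, ⟨sUnion_subset fun _ ht => (hcs ht).1,
      (pairwise_sUnion hc.directedOn).2 fun _ ht => (hcs ht).2⟩,
      fun _ => subset_sUnion_of_mem⟩

theorem exists_isSeparated_isCover [PseudoEMetricSpace α] (ε : ℝ≥0) (s : Set α) :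
    ∃ N ⊆ s, IsSeparated ε N ∧ IsCover ε s N := by
  obtain ⟨N, hN⟩ := exists_maximal_isSeparated (ε : ℝ≥0∞) s
  exact ⟨N, hN.prop.1, hN.prop.2, .of_maximal_isSeparated hN⟩

variable [PseudoMetricSpace α]

theorem isSeparated_coe_iff {ε : ℝ≥0} {s : Set α} :
    IsSeparated ε s ↔ s.Pairwise (ε < dist · ·) := by
  simp only [IsSeparated, edist_nndist, ENNReal.coe_lt_coe, ← NNReal.coe_lt_coe, coe_nndist]

theorem isCover_iff_exists_dist_le {ε : ℝ≥0} {s N : Set α} :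
    IsCover ε s N ↔ ∀ x ∈ s, ∃ y ∈ N, dist x y ≤ ε := by
  simp [isCover_iff_subset_iUnion_closedBall, subset_def]

end Metric

theorem Dense.exists_map_dist_lt_of_eq {α : Type*} [PseudoMetricSpace α] {R : Set α}
    (hR : Dense R) {δ : ℝ} (hδ : 0 < δ) : ∃ r : α → R, ∀ x y, r x = r y → dist x y < δ := by
  choose r hrR hr using fun x => hR.exists_dist_lt x (half_pos hδ)
  refine ⟨fun x => ⟨r x, hrR x⟩, fun x y hxy => ?_⟩
  calc dist x y ≤ dist x (r x) + dist y (r y) := by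
        rw [show r x = r y from congrArg Subtype.val hxy]; exact dist_triangle_right _ _ _
    _ < δ := by linarith [hr x, hr y]

theorem Metric.IsSeparated.mk_le_of_dense {α : Type*} [PseudoMetricSpace α] {ε : ℝ≥0}
    (hε : 0 < ε) {S R : Set α} (hS : IsSeparated ε S) (hR : Dense R) : #S ≤ #R := by
  obtain ⟨r, hr⟩ := hR.exists_map_dist_lt_of_eq (NNReal.coe_pos.2 hε)
  refine mk_le_of_injective (f := fun x : S => r x) fun x y hxy => Subtype.ext ?_
  by_contra hne
  exact (isSeparated_coe_iff.1 hS x.2 y.2 hne).not_gt (hr x y hxy)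

theorem Dense.exists_dense_pi_fin_mk_le {α : Type*} [TopologicalSpace α] {R : Set α}
    (hR : Dense R) (n : ℕ) : ∃ R' : Set (Fin n → α), Dense R' ∧ #R' ≤ max #R ℵ₀ := by
  refine ⟨range (Pi.map fun _ => Subtype.val : (Fin n → R) → Fin n → α),
    DenseRange.piMap fun _ => hR.denseRange_val, mk_range_le.trans ?_⟩
  simpa [mk_arrow] using power_nat_le_max (c := #R) (n := n)

section Span

variable {E : Type*}

theorem dense_span_of_isCover_univ [SeminormedAddCommGroup E] [NormedSpace ℝ E] {ε : ℝ≥0}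
    {N : Set E} (hN : IsCover ε univ N) : Dense (span ℝ N : Set E) := by
  refine Metric.dense_iff.2 fun y δ hδ => ?_
  set c : ℝ := δ / (ε + 1)
  have hc : 0 < c := by positivity
  obtain ⟨m, hm, hym⟩ := isCover_iff_exists_dist_le.1 hN (c⁻¹ • y) trivial
  refine ⟨c • m, ?_, smul_mem _ _ (subset_span hm)⟩
  have : c • m - y = c • (m - c⁻¹ • y) := by rw [smul_sub, smul_inv_smul₀ hc.ne']
  rw [mem_ball, dist_eq_norm, this, norm_smul, Real.norm_of_nonneg hc.le, ← dist_eq_norm,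
    dist_comm]
  calc c * dist (c⁻¹ • y) m ≤ c * ε := by gcongr
    _ < δ := by rw [div_mul_eq_mul_div, div_lt_iff₀ (by positivity)]; nlinarith [ε.2]

theorem dense_span_of_isCover_sphere [NormedAddCommGroup E] [NormedSpace ℝ E] {ε : ℝ≥0}
    (hε : ε < 1) {N : Set E} (hN : IsCover ε (sphere 0 1) N) : Dense (span ℝ N : Set E) := by
  set F := (span ℝ N).topologicalClosure
  by_contra hdense
  have hF : ∃ x, x ∉ F := by
    by_contra! h
    exact hdense (dense_iff_closure_eq.2 (eq_univ_of_forall fun x => by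
      simpa [F, ← topologicalClosure_coe] using h x))
  obtain ⟨x, -, hx, hxF⟩ := riesz_lemma_of_lt_one (span ℝ N).isClosed_topologicalClosure hF
    (r := (ε + 1) / 2) (by linarith [NNReal.coe_lt_one.2 hε])
  obtain ⟨m, hm, hxm⟩ := isCover_iff_exists_dist_le.1 hN x (mem_sphere_zero_iff_norm.2 hx)
  have := hxF m (le_topologicalClosure _ (subset_span hm))
  rw [dist_eq_norm] at hxm
  linarith

theorem Set.infinite_of_dense_span [NormedAddCommGroup E] [NormedSpace ℝ E]
    (hE : ¬ FiniteDimensional ℝ E) {s : Set E} (hs : Dense (span ℝ s : Set E)) : s.Infinite := by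
  intro hfin
  have := FiniteDimensional.span_of_finite ℝ hfin
  have htop : span ℝ s = ⊤ := eq_top_iff'.2 fun x => by
    rw [← SetLike.mem_coe, ← (span ℝ s).closed_of_finiteDimensional.closure_eq, hs.closure_eq]
    trivial
  exact hE (Module.Finite.equiv (LinearEquiv.ofTop _ htop))

variable [SeminormedAddCommGroup E] [NormedSpace ℝ E]

theorem exists_dense_mk_le_of_dense_span {s : Set E} (hs : Dense (span ℝ s : Set E)) :
    ∃ R : Set E, Dense R ∧ #R ≤ max #s ℵ₀ := by
  set R := range fun l : List (ℚ × s) => (l.map fun p => (p.1 : ℝ) • (p.2 : E)).sum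
  refine ⟨R, dense_closure.1 (hs.mono ?_), mk_range_le.trans ((mk_list_le_max _).trans ?_)⟩
  · intro y hy
    obtain ⟨n, a, g, rfl⟩ := mem_span_set'.1 hy
    let h : (Fin n → ℝ × s) → E := fun p => ∑ i, (p i).1 • ((p i).2 : E)
    have hcont : Continuous h := by fun_prop
    have hdense : DenseRange (Pi.map fun _ => Prod.map ((↑) : ℚ → ℝ) id : (Fin n → ℚ × s) → _) :=
      DenseRange.piMap fun _ => Rat.denseRange_cast.prodMap denseRange_id
    refine closure_mono ?_
      (hcont.range_subset_closure_image_dense hdense ⟨fun i => (a i, g i), rfl⟩)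
    rintro _ ⟨_, ⟨q, rfl⟩, rfl⟩
    exact ⟨List.ofFn q, by simp [h, List.map_ofFn, List.sum_ofFn, Pi.map]⟩
  · rw [mk_prod, mk_eq_aleph0 ℚ, lift_aleph0, lift_uzero]
    exact max_le (le_max_right _ _) ((mul_le_max _ _).trans
      (max_le (max_le (le_max_right _ _) (le_max_left _ _)) (le_max_right _ _)))

theorem spanDim_le_mk_s11 {s : Set E} (hs : Dense (span ℝ s : Set E)) : spanDim E ≤ #s :=
  csInf_le' ⟨s, hs.closure_eq, rfl⟩

end Span

section SpanDim

variable (E : Type*) [SeminormedAddCommGroup E] [NormedSpace ℝ E]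

theorem exists_dense_mk_le_max_spanDim : ∃ R : Set E, Dense R ∧ #R ≤ max (spanDim E) ℵ₀ := by
  obtain ⟨s, hs, hcard⟩ := csInf_mem (⟨_, Set.univ, by simp, rfl⟩ :
    {c : Cardinal | ∃ s : Set E, closure (span ℝ s : Set E) = Set.univ ∧ #s = c}.Nonempty)
  obtain ⟨R, hR, hRcard⟩ := exists_dense_mk_le_of_dense_span (dense_iff_closure_eq.2 hs)
  exact ⟨R, hR, hRcard.trans_eq (by rw [hcard]; rfl)⟩

theorem exists_isSeparated_spanDim_le_mk :
    ∃ T : Set E, IsSeparated (1 : ℝ≥0) T ∧ spanDim E ≤ #T := by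
  obtain ⟨T, -, hT, hcov⟩ := exists_isSeparated_isCover (1 : ℝ≥0) (univ : Set E)
  exact ⟨T, hT, spanDim_le_mk_s11 (dense_span_of_isCover_univ hcov)⟩

end SpanDim

theorem Filter.exists_tendsto_atTop_of_compl_iInter_mem {I : Type*} {l : Filter I}
    {g : ℕ → Set I} (hg : ∀ n, g n ∈ l) (hl : (⋂ n, g n)ᶜ ∈ l) :
    ∃ N : I → ℕ, Tendsto N l atTop := by
  classical
  refine ⟨fun i => if h : ∃ n, i ∉ g n then Nat.find h else 0, tendsto_atTop.2 fun k => ?_⟩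
  filter_upwards [hl, (eventually_all_finite (Set.finite_lt_nat k)).2 fun m _ => hg m]
    with i hi hik
  have h : ∃ n, i ∉ g n := by simpa using hi
  rw [dif_pos h, Nat.le_find_iff]
  exact fun m hm => not_not.2 (hik m hm)

theorem CountablyIncomplete.exists_tendsto_atTop {I : Type*} {D : Ultrafilter I}
    (hD : CountablyIncomplete D) : ∃ N : I → ℕ, Tendsto N (D : Filter I) atTop := by
  simp only [CountablyIncomplete, UltrafilterComplete, not_forall] at hD
  obtain ⟨G, hG, hGcard, hGD⟩ := hD
  have hGc : G.Countable := by
    rw [← succ_aleph0, lift_succ, lift_aleph0, Order.lt_succ_iff, lift_le_aleph0] at hGcard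
    exact mk_le_aleph0_iff.1 hGcard
  have hGne : G.Nonempty :=
    nonempty_iff_ne_empty.2 fun h => hGD (by rw [h, sInter_empty]; exact univ_mem)
  obtain ⟨g, rfl⟩ := hGc.exists_eq_range hGne
  rw [sInter_range] at hGD
  exact exists_tendsto_atTop_of_compl_iInter_mem (fun n => hG _ ⟨n, rfl⟩)
    (Ultrafilter.compl_mem_iff_notMem.2 hGD)

theorem exists_separating_maps_pi_fin_closedBall {X : Type*} [NormedAddCommGroup X]
    [NormedSpace ℝ X] (hX : ¬ FiniteDimensional ℝ X) {δ : ℝ} (hδ : 0 < δ) :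
    ∃ c : ∀ n, (Fin n → X) → closedBall (0 : X) 1,
      ∀ n x y, δ ≤ dist x y → 1 / 2 < dist (c n x) (c n y) := by
  obtain ⟨S, hS1, hSsep, hScov⟩ := exists_isSeparated_isCover (1 / 2 : ℝ≥0) (sphere (0 : X) 1)
  have hSspan := dense_span_of_isCover_sphere (by norm_num) hScov
  have hSinf : ℵ₀ ≤ #S := aleph0_le_mk_iff.2 (Set.infinite_of_dense_span hX hSspan).to_subtype
  obtain ⟨R, hR, hRcard⟩ := exists_dense_mk_le_of_dense_span hSspan
  have hcode : ∀ n, ∃ c : (Fin n → X) → S, ∀ x y, c x = c y → dist x y < δ := by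
    intro n
    obtain ⟨R', hR', hR'card⟩ := hR.exists_dense_pi_fin_mk_le n
    obtain ⟨r, hr⟩ := hR'.exists_map_dist_lt_of_eq hδ
    obtain ⟨e⟩ : Nonempty (R' ↪ S) :=
      hR'card.trans (max_le (hRcard.trans (max_le le_rfl hSinf)) hSinf)
    exact ⟨e ∘ r, fun x y h => hr x y (e.injective h)⟩
  choose c hc using hcode
  refine ⟨fun n x => ⟨c n x, sphere_subset_closedBall (hS1 (c n x).2)⟩, fun n x y hxy => ?_⟩
  have hne : (c n x : X) ≠ c n y := fun h => (hc n x y (Subtype.ext h)).not_ge hxy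
  simpa [Subtype.dist_eq] using isSeparated_coe_iff.1 hSsep (c n x).2 (c n y).2 hne

namespace Ultrapower

variable {I : Type*} {X : Type*} [NormedAddCommGroup X] [NormedSpace ℝ X]

section Norm

variable {D : Ultrafilter I} {f : lp (fun _ : I => X) ∞} {c : ℝ}

theorem norm_mk_le_of_eventually (h : ∀ᶠ i in (D : Filter I), ‖f i‖ ≤ c) :
    ‖(Submodule.Quotient.mk f : Ultrapower D X)‖ ≤ c := by
  obtain ⟨i₀, hi₀⟩ := h.exists
  have hc : 0 ≤ c := (norm_nonneg _).trans hi₀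
  set A := {i | ‖f i‖ ≤ c}
  have hg : Memℓp (A.indicator f) ∞ := memℓp_infty_iff.2 ⟨‖f‖, by
    rintro _ ⟨i, rfl⟩
    exact (norm_indicator_le_norm_self _ i).trans (lp.norm_apply_le_norm ENNReal.top_ne_zero f i)⟩
  have hmk : (Submodule.Quotient.mk f : Ultrapower D X) = Submodule.Quotient.mk ⟨_, hg⟩ := by
    refine (Submodule.Quotient.eq _).2 (tendsto_const_nhds.congr' ?_)
    filter_upwards [h] with i hi
    rw [lp.coeFn_sub, Pi.sub_apply]
    change (0 : ℝ) = ‖f i - A.indicator f i‖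
    rw [Set.indicator_of_mem (show i ∈ A from hi), sub_self, norm_zero]
  rw [hmk]
  refine (Submodule.Quotient.norm_mk_le _ _).trans (lp.norm_le_of_forall_le hc fun i => ?_)
  by_cases hi : i ∈ A
  · simpa [Set.indicator_of_mem hi] using show ‖f i‖ ≤ c from hi
  · simpa [Set.indicator_of_notMem hi] using hc

theorem le_norm_mk_of_eventually (h : ∀ᶠ i in (D : Filter I), c ≤ ‖f i‖) :
    c ≤ ‖(Submodule.Quotient.mk f : Ultrapower D X)‖ := by
  by_contra! hlt
  obtain ⟨g, hgf, hg⟩ := Submodule.Quotient.norm_mk_lt (Submodule.Quotient.mk f : Ultrapower D X)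
    (sub_pos.2 hlt)
  have hnull : Tendsto (fun i => ‖(g - f) i‖) (D : Filter I) (nhds 0) :=
    (Submodule.Quotient.eq _).1 hgf
  obtain ⟨i, hfi, hgfi⟩ :=
    (h.and (hnull.eventually_lt_const (sub_pos.2 (show ‖g‖ < c by linarith)))).exists
  have hgi : ‖g i‖ ≤ ‖g‖ := lp.norm_apply_le_norm ENNReal.top_ne_zero g i
  have : ‖f i‖ ≤ ‖g i‖ + ‖g i - f i‖ := norm_le_insert _ _
  simp only [lp.coeFn_sub, Pi.sub_apply] at hgfi
  linarith

theorem eventually_le_norm_of_lt_norm_mk (h : c < ‖(Submodule.Quotient.mk f : Ultrapower D X)‖) :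
    ∀ᶠ i in (D : Filter I), c ≤ ‖f i‖ := by
  by_contra hf
  have := norm_mk_le_of_eventually ((Ultrafilter.eventually_not.2 hf).mono fun i hi =>
    (not_le.1 hi).le)
  linarith

end Norm

def diagonalCode (N : I → ℕ) (c : ∀ n, (Fin n → X) → closedBall (0 : X) 1)
    (f : ℕ → lp (fun _ : I => X) ∞) : lp (fun _ : I => X) ∞ :=
  ⟨fun i => c (N i) fun m => f m i, memℓp_infty ⟨1, by
    rintro _ ⟨i, rfl⟩
    exact mem_closedBall_zero_iff.1 (c _ _).2⟩⟩

theorem half_le_dist_mk_diagonalCode {D : Ultrafilter I} {N : I → ℕ}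
    (hN : Tendsto N (D : Filter I) atTop) {c : ∀ n, (Fin n → X) → closedBall (0 : X) 1} {δ : ℝ}
    (hc : ∀ n x y, δ ≤ dist x y → 1 / 2 < dist (c n x) (c n y))
    {f g : ℕ → lp (fun _ : I => X) ∞} {n : ℕ} (hfg : ∀ᶠ i in (D : Filter I), δ ≤ ‖f n i - g n i‖) :
    1 / 2 ≤ dist (Submodule.Quotient.mk (diagonalCode N c f) : Ultrapower D X)
      (Submodule.Quotient.mk (diagonalCode N c g)) := by
  rw [dist_eq_norm, ← Submodule.Quotient.mk_sub]
  refine le_norm_mk_of_eventually ?_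
  filter_upwards [hfg, hN.eventually_gt_atTop n] with i hi hni
  have : δ ≤ dist (fun m : Fin (N i) => f m i) (fun m => g m i) :=
    hi.trans ((dist_eq_norm _ _).symm.trans_le
      (dist_le_pi_dist (fun m : Fin (N i) => f m i) (fun m => g m i) ⟨n, hni⟩))
  rw [lp.coeFn_sub, Pi.sub_apply, ← dist_eq_norm]
  exact (hc _ _ _ this).le

theorem exists_isSeparated_mk_pow_aleph0_le {D : Ultrafilter I} (hX : ¬ FiniteDimensional ℝ X)
    (hD : CountablyIncomplete D) {T : Set (Ultrapower D X)} (hT : IsSeparated (1 : ℝ≥0) T) :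
    ∃ W : Set (Ultrapower D X), IsSeparated (1 / 4 : ℝ≥0) W ∧ #T ^ ℵ₀ ≤ #W := by
  obtain ⟨N, hN⟩ := hD.exists_tendsto_atTop
  obtain ⟨c, hc⟩ := exists_separating_maps_pi_fin_closedBall hX (one_half_pos (α := ℝ))
  choose f hf using fun t : T => Submodule.Quotient.mk_surjective _ (t : Ultrapower D X)
  have hfsep : ∀ t t' : T, t ≠ t' → ∀ᶠ i in (D : Filter I), 1 / 2 ≤ ‖f t i - f t' i‖ := by
    intro t t' hne
    have h1 := isSeparated_coe_iff.1 hT t.2 t'.2 (Subtype.coe_ne_coe.2 hne)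
    have : 1 / 2 < ‖(Submodule.Quotient.mk (f t - f t') : Ultrapower D X)‖ := by
      rw [Submodule.Quotient.mk_sub, hf, hf, ← dist_eq_norm]
      push_cast at h1
      linarith
    simpa using eventually_le_norm_of_lt_norm_mk this
  let Φ : (ℕ → T) → Ultrapower D X := fun s =>
    Submodule.Quotient.mk (diagonalCode N c (f ∘ s))
  have hΦ : ∀ s s', s ≠ s' → 1 / 2 ≤ dist (Φ s) (Φ s') := by
    intro s s' hne
    obtain ⟨_, hn⟩ := Function.ne_iff.1 hne
    exact half_le_dist_mk_diagonalCode hN hc (hfsep _ _ hn)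
  have hΦinj : Function.Injective Φ := fun s s' h =>
    by_contra fun hne => absurd (hΦ s s' hne) (by rw [h, dist_self]; norm_num)
  refine ⟨range Φ, isSeparated_coe_iff.2 ?_, ?_⟩
  · rintro _ ⟨s, rfl⟩ _ ⟨s', rfl⟩ hne
    have := hΦ s s' fun h => hne (h ▸ rfl)
    push_cast
    linarith
  · rw [mk_range_eq Φ hΦinj, mk_arrow, mk_nat, lift_aleph0, lift_uzero]

end Ultrapower

theorem Cardinal.eq_power_aleph0_of_power_aleph0_le_max {κ : Cardinal}
    (h : κ ^ ℵ₀ ≤ max κ ℵ₀) : κ = κ ^ ℵ₀ := by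
  rcases lt_or_ge κ 2 with hκ | hκ
  · obtain ⟨n, rfl⟩ := lt_aleph0.1 (hκ.trans ofNat_lt_aleph0)
    have : n < 2 := by exact_mod_cast hκ
    interval_cases n <;> simp [zero_power aleph0_ne_zero]
  · have hκ₀ : ℵ₀ ≤ κ := by
      by_contra! hfin
      have := (cantor ℵ₀).trans_le ((power_le_power_right hκ).trans h)
      rw [max_eq_right hfin.le] at this
      exact this.false
    exact le_antisymm (self_le_power κ one_le_aleph0) (h.trans (max_eq_left hκ₀).le)

theorem spanDim_ultrapower_pow_aleph0_general
    (X : Type*) [NormedAddCommGroup X] [NormedSpace ℝ X]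
    (hinf : ¬ FiniteDimensional ℝ X)
    {I : Type*} (D : Ultrafilter I) (hD : CountablyIncomplete D) :
    spanDim (Ultrapower D X) = (spanDim (Ultrapower D X)) ^ Cardinal.aleph0 := by
  obtain ⟨R, hR, hRcard⟩ := exists_dense_mk_le_max_spanDim (Ultrapower D X)
  obtain ⟨T, hT, hTcard⟩ := exists_isSeparated_spanDim_le_mk (Ultrapower D X)
  obtain ⟨W, hW, hWcard⟩ := Ultrapower.exists_isSeparated_mk_pow_aleph0_le hinf hD hT
  refine eq_power_aleph0_of_power_aleph0_le_max ?_
  calc spanDim (Ultrapower D X) ^ ℵ₀ ≤ #T ^ ℵ₀ := power_le_power_right hTcard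
    _ ≤ #W := hWcard
    _ ≤ #R := hW.mk_le_of_dense (by norm_num) hR
    _ ≤ max (spanDim (Ultrapower D X)) ℵ₀ := hRcard

/-- For every infinite-dimensional Banach space `X` and every countably incomplete
ultrafilter `D`, the ultrapower satisfies `dim (X)_D = (dim (X)_D) ^ ω`. -/
theorem spanDim_ultrapower_pow_aleph0
    (X : Type*) [NormedAddCommGroup X] [NormedSpace ℝ X] [CompleteSpace X]
    (hinf : ¬ FiniteDimensional ℝ X)
    {I : Type*} (D : Ultrafilter I) (hD : CountablyIncomplete D) :
    spanDim (Ultrapower D X) = (spanDim (Ultrapower D X)) ^ Cardinal.aleph0 :=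
  spanDim_ultrapower_pow_aleph0_general X hinf D hD
end
end

section
/- Let X be an infinite-dimensional real Banach space and let D and E be countably incomplete ultrafilters. Then the ultrapowers (X)_D and (X)_E are ω-equivalent: every separable closed subspace of (X)_D is isomorphic to a closed subspace of (X)_E, and vice versa. -/
open Cardinal Filter
open scoped ENNReal

universe u v

noncomputable section

/-- `X` is `ω`-representable in `Y`: every separable closed linear subspace of `X` is
isomorphic (linearly homeomorphic) to a closed linear subspace of `Y`. -/
def OmegaRepresentable (X : Type*) [SeminormedAddCommGroup X] [NormedSpace ℝ X]
    (Y : Type*) [SeminormedAddCommGroup Y] [NormedSpace ℝ Y] : Prop :=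
  ∀ E : Submodule ℝ X, IsClosed (E : Set X) → TopologicalSpace.SeparableSpace E →
    ∃ F : Submodule ℝ Y, IsClosed (F : Set Y) ∧ Nonempty (E ≃L[ℝ] F)

/-!
If `D₂` is countably incomplete, some `lev : J → ℕ` tends to infinity along `D₂`, so for every
countably generated filter `F` with `D₁ ≤ F` there is `φ : J → I` with `map φ D₂ ≤ F`: take
`φ = s ∘ lev` for a sequence `s` converging to `F`. For countably many bounded families `x`, the
filter pinning down all the limits `lim_{D₁} ‖x i‖` is such an `F`, so reindexing along `φ`
preserves their ultrapower norms. Applied to a countable dense subset of the span of lifts of a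
dense subset of a separable subspace `E ⊆ (X)_{D₁}`, and extended by continuity and density,
this yields a linear isometric embedding of `E` into the Banach space `(X)_{D₂}`.
-/

open Topology

namespace CountablyIncomplete

variable {J : Type*} {D : Ultrafilter J}

theorem exists_iInter_eq_empty_s13 (hD : CountablyIncomplete D) :
    ∃ K : ℕ → Set J, (∀ n, K n ∈ D) ∧ ⋂ n, K n = ∅ := by
  simp only [CountablyIncomplete, UltrafilterComplete, not_forall, exists_prop] at hD
  obtain ⟨G, hGD, hG, hGD'⟩ := hD
  rw [Cardinal.lift_uzero, Cardinal.lift_aleph, Ordinal.lift_one, Cardinal.lt_aleph_one_iff,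
    Cardinal.le_aleph0_iff_set_countable] at hG
  obtain rfl | hG_ne := G.eq_empty_or_nonempty
  · rw [Set.sInter_empty] at hGD'
    exact absurd univ_mem hGD'
  obtain ⟨K, rfl⟩ := hG.exists_eq_range hG_ne
  refine ⟨fun n => K n ∩ (⋂₀ Set.range K)ᶜ, fun n => inter_mem (hGD _ ⟨n, rfl⟩)
    (Ultrafilter.compl_mem_iff_notMem.2 hGD'), ?_⟩
  rw [← Set.iInter_inter, ← Set.sInter_range, Set.inter_compl_self]

theorem exists_tendsto_atTop_s13 (hD : CountablyIncomplete D) :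
    ∃ f : J → ℕ, Tendsto f D atTop := by
  obtain ⟨K, hK, hK_empty⟩ := hD.exists_iInter_eq_empty_s13
  have hexit : ∀ j, ∃ n, j ∉ K n := fun j => by
    by_contra! hj
    simpa [hK_empty] using Set.mem_iInter.2 hj
  classical
  refine ⟨fun j => Nat.find (hexit j), tendsto_atTop.2 fun N => ?_⟩
  filter_upwards [(biInter_mem (Set.finite_lt_nat N)).2 fun m _ => hK m] with j hj
  simpa [Nat.le_find_iff] using hj

theorem exists_tendsto {α : Type*} (hD : CountablyIncomplete D) (F : Filter α)
    [F.IsCountablyGenerated] [F.NeBot] : ∃ φ : J → α, Tendsto φ D F := by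
  obtain ⟨f, hf⟩ := hD.exists_tendsto_atTop_s13
  obtain ⟨x, hx⟩ := F.exists_seq_tendsto
  exact ⟨x ∘ f, hx.comp hf⟩

end CountablyIncomplete

theorem memℓp_infty_of_norm_le {ι E : Type*} [NormedAddCommGroup E] {f : ι → E} {C : ℝ}
    (hf : ∀ i, ‖f i‖ ≤ C) : Memℓp f ∞ :=
  memℓp_infty ⟨C, by rintro - ⟨i, rfl⟩; exact hf i⟩

def lpInftyComp {I J X : Type*} [NormedAddCommGroup X] [NormedSpace ℝ X] (φ : J → I) :
    lp (fun _ : I => X) ∞ →L[ℝ] lp (fun _ : J => X) ∞ :=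
  LinearMap.mkContinuous
    { toFun := fun x => ⟨fun j => x (φ j),
        memℓp_infty_of_norm_le fun j => lp.norm_apply_le_norm ENNReal.top_ne_zero x (φ j)⟩
      map_add' := fun _ _ => rfl
      map_smul' := fun _ _ => rfl }
    1 fun x => by
      rw [one_mul]
      exact lp.norm_le_of_forall_le (norm_nonneg x) fun j =>
        lp.norm_apply_le_norm ENNReal.top_ne_zero x (φ j)

theorem LinearMap.exists_linearIsometry_of_norm_eq {𝕜 Z Q W : Type*}
    [NontriviallyNormedField 𝕜] [AddCommGroup Z] [Module 𝕜 Z]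
    [SeminormedAddCommGroup Q] [NormedSpace 𝕜 Q]
    [NormedAddCommGroup W] [NormedSpace 𝕜 W] [CompleteSpace W]
    {q : Z →ₗ[𝕜] Q} {T : Z →ₗ[𝕜] W} (hq : DenseRange q) (hT : ∀ z, ‖T z‖ = ‖q z‖) :
    ∃ S : Q →ₗᵢ[𝕜] W, ∀ z, S (q z) = T z := by
  have hext : ∀ z, T.extendOfNorm q (q z) = T z :=
    LinearMap.extendOfNorm_eq hq ⟨1, fun z => by rw [one_mul, hT]⟩
  refine ⟨⟨(T.extendOfNorm q).toLinearMap, fun y => ?_⟩, hext⟩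
  refine hq.induction_on y (isClosed_eq (by fun_prop) continuous_norm) fun z => ?_
  simp [hext, hT]

theorem omegaRepresentable_of_linearIsometry {Q Y : Type*}
    [NormedAddCommGroup Q] [NormedSpace ℝ Q] [CompleteSpace Q]
    [NormedAddCommGroup Y] [NormedSpace ℝ Y]
    (h : ∀ E : Submodule ℝ Q, IsClosed (E : Set Q) → TopologicalSpace.SeparableSpace E →
      Nonempty (E →ₗᵢ[ℝ] Y)) :
    OmegaRepresentable Q Y := by
  intro E hE hsep
  obtain ⟨S⟩ := h E hE hsep
  have : CompleteSpace E := hE.completeSpace_coe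
  exact ⟨LinearMap.range S.toLinearMap, S.isometry.isClosedEmbedding.isClosed_range,
    ⟨S.equivRange.toContinuousLinearEquiv⟩⟩

namespace Ultrapower

variable {I J X : Type*} [NormedAddCommGroup X] [NormedSpace ℝ X]

theorem norm_mk_eq_of_tendsto (D : Ultrafilter I) {x : lp (fun _ : I => X) ∞} {L : ℝ}
    (h : Tendsto (fun i => ‖x i‖) D (𝓝 L)) :
    ‖(Submodule.Quotient.mk x : Ultrapower D X)‖ = L := by
  apply le_antisymm
  · refine le_of_forall_pos_le_add fun ε hε => ?_
    have hL : 0 ≤ L := ge_of_tendsto' h fun i => norm_nonneg _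
    classical
    let g : I → X := fun i => if ‖x i‖ ≤ L + ε then x i else 0
    have hg : ∀ i, ‖g i‖ ≤ L + ε := fun i => by
      by_cases hi : ‖x i‖ ≤ L + ε <;> simp [g, hi]; linarith
    let z : lp (fun _ : I => X) ∞ := ⟨g, memℓp_infty_of_norm_le hg⟩
    have hxz : x - z ∈ ultraNull D X := by
      refine tendsto_const_nhds.congr' ?_
      filter_upwards [h.eventually_le_const (lt_add_of_pos_right L hε)] with i hi
      simp only [z, g, lp.coeFn_sub, Pi.sub_apply, hi, if_true, sub_self, norm_zero]
    calc ‖(Submodule.Quotient.mk x : Ultrapower D X)‖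
        = ‖(Submodule.Quotient.mk z : Ultrapower D X)‖ := by
          rw [(Submodule.Quotient.eq _).2 hxz]
      _ ≤ ‖z‖ := Submodule.Quotient.norm_mk_le _ _
      _ ≤ L + ε := lp.norm_le_of_forall_le (by linarith) hg
  · refine le_of_forall_pos_lt_add fun ε hε => ?_
    obtain ⟨m, hm, hmx⟩ := Submodule.Quotient.norm_mk_lt
      (Submodule.Quotient.mk x : Ultrapower D X) hε
    have hmx_null : Tendsto (fun i => ‖m i - x i‖) D (𝓝 0) := (Submodule.Quotient.eq _).1 hm
    have hm_lim : Tendsto (fun i => ‖m i‖) D (𝓝 L) :=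
      tendsto_of_tendsto_of_dist h <| squeeze_zero (fun _ => dist_nonneg)
        (fun i => by rw [dist_comm]; exact dist_norm_norm_le _ _) hmx_null
    exact (le_of_tendsto' hm_lim fun i =>
      lp.norm_apply_le_norm ENNReal.top_ne_zero m i).trans_lt hmx

theorem tendsto_norm_mk (D : Ultrafilter I) (x : lp (fun _ : I => X) ∞) :
    Tendsto (fun i => ‖x i‖) D (𝓝 ‖(Submodule.Quotient.mk x : Ultrapower D X)‖) := by
  obtain ⟨L, -, hL⟩ := (isCompact_Icc (a := 0) (b := ‖x‖)).ultrafilter_le_nhds'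
    (D.map fun i => ‖x i‖) (Ultrafilter.mem_map.2 (univ_mem' fun i =>
      ⟨norm_nonneg _, lp.norm_apply_le_norm ENNReal.top_ne_zero x i⟩))
  have hL' : Tendsto (fun i => ‖x i‖) D (𝓝 L) := by rwa [Ultrafilter.coe_map] at hL
  rwa [norm_mk_eq_of_tendsto D hL']

/-- This is what makes `Ultrapower D X` a `NormedAddCommGroup`, and a Banach space when `X` is. -/
instance isClosed_ultraNull (D : Ultrafilter I) :
    IsClosed (ultraNull D X : Set (lp (fun _ : I => X) ∞)) := by
  have hN : (ultraNull D X : Set (lp (fun _ : I => X) ∞)) =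
      {x | ‖(Submodule.Quotient.mk x : Ultrapower D X)‖ = 0} := by
    ext x
    refine ⟨norm_mk_eq_of_tendsto D, fun hx => ?_⟩
    have hx : ‖(Submodule.Quotient.mk x : Ultrapower D X)‖ = 0 := hx
    show Tendsto _ _ _
    rw [← hx]
    exact tendsto_norm_mk D x
  rw [hN]
  exact isClosed_eq (continuous_norm.comp (ultraNull D X).mkQL.continuous) continuous_const

theorem exists_norm_mk_lpInftyComp_eq_of_countable (D₁ : Ultrafilter I)
    {D₂ : Ultrafilter J} (hD₂ : CountablyIncomplete D₂) {S : Set (lp (fun _ : I => X) ∞)}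
    (hS : S.Countable) :
    ∃ φ : J → I, ∀ x ∈ S, ‖(Submodule.Quotient.mk (lpInftyComp φ x) : Ultrapower D₂ X)‖ =
      ‖(Submodule.Quotient.mk x : Ultrapower D₁ X)‖ := by
  have := hS.to_subtype
  let F : Filter I := ⨅ x : S, comap (fun i => ‖(x : lp (fun _ : I => X) ∞) i‖)
    (𝓝 ‖(Submodule.Quotient.mk (x : lp (fun _ : I => X) ∞) : Ultrapower D₁ X)‖)
  have hD₁F : (D₁ : Filter I) ≤ F :=
    le_iInf fun x => (tendsto_norm_mk D₁ (x : lp (fun _ : I => X) ∞)).le_comap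
  have : F.NeBot := neBot_of_le hD₁F
  obtain ⟨φ, hφ⟩ := hD₂.exists_tendsto F
  refine ⟨φ, fun x hx => norm_mk_eq_of_tendsto D₂ ?_⟩
  exact (tendsto_comap_iff.1 (tendsto_iInf.1 hφ ⟨x, hx⟩) :)

theorem exists_norm_mk_lpInftyComp_eq (D₁ : Ultrafilter I)
    {D₂ : Ultrafilter J} (hD₂ : CountablyIncomplete D₂) {S : Set (lp (fun _ : I => X) ∞)}
    (hS : TopologicalSpace.IsSeparable S) :
    ∃ φ : J → I, ∀ x ∈ S, ‖(Submodule.Quotient.mk (lpInftyComp φ x) : Ultrapower D₂ X)‖ =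
      ‖(Submodule.Quotient.mk x : Ultrapower D₁ X)‖ := by
  obtain ⟨c, hc, hSc⟩ := hS
  obtain ⟨φ, hφ⟩ := exists_norm_mk_lpInftyComp_eq_of_countable D₁ hD₂ hc
  refine ⟨φ, Set.EqOn.mono hSc (Set.EqOn.closure hφ ?_ ?_)⟩
  · exact continuous_norm.comp ((ultraNull D₂ X).mkQL.comp (lpInftyComp φ)).continuous
  · exact continuous_norm.comp (ultraNull D₁ X).mkQL.continuous

theorem omegaRepresentable [CompleteSpace X] (D₁ : Ultrafilter I)
    {D₂ : Ultrafilter J} (hD₂ : CountablyIncomplete D₂) :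
    OmegaRepresentable (Ultrapower D₁ X) (Ultrapower D₂ X) := by
  refine omegaRepresentable_of_linearIsometry fun E hE hsep => ?_
  obtain ⟨s, hs, hs_dense⟩ := TopologicalSpace.exists_countable_dense E
  choose lift hlift using Submodule.Quotient.mk_surjective (ultraNull D₁ X)
  let P := Submodule.span ℝ (lift '' (Subtype.val '' s))
  have hPE : P.map (ultraNull D₁ X).mkQ ≤ E := by
    rw [Submodule.map_span_le]
    rintro - ⟨-, ⟨y, -, rfl⟩, rfl⟩
    simp [hlift]
  have hP : TopologicalSpace.IsSeparable (P : Set (lp (fun _ : I => X) ∞)) :=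
    ((hs.image Subtype.val).image lift).isSeparable.span
  obtain ⟨φ, hφ⟩ := exists_norm_mk_lpInftyComp_eq D₁ hD₂ hP
  let q : P →ₗ[ℝ] E := ((ultraNull D₁ X).mkQ ∘ₗ P.subtype).codRestrict E
    fun x => hPE ⟨x, x.2, rfl⟩
  let T : P →ₗ[ℝ] Ultrapower D₂ X :=
    (ultraNull D₂ X).mkQ ∘ₗ (lpInftyComp φ).toLinearMap ∘ₗ P.subtype
  have hq : DenseRange q := by
    refine hs_dense.mono fun y hy => ⟨⟨lift y, Submodule.subset_span ⟨y, ⟨y, hy, rfl⟩, rfl⟩⟩, ?_⟩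
    ext
    exact hlift y
  obtain ⟨S, -⟩ := LinearMap.exists_linearIsometry_of_norm_eq (T := T) hq fun x => hφ x x.2
  exact ⟨S⟩

end Ultrapower

theorem ultrapowers_omega_equivalent_general
    (X : Type*) [NormedAddCommGroup X] [NormedSpace ℝ X] [CompleteSpace X]
    {I J : Type*} (D₁ : Ultrafilter I) (D₂ : Ultrafilter J)
    (hD₁ : CountablyIncomplete D₁) (hD₂ : CountablyIncomplete D₂) :
    OmegaRepresentable (Ultrapower D₁ X) (Ultrapower D₂ X) ∧
      OmegaRepresentable (Ultrapower D₂ X) (Ultrapower D₁ X) :=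
  ⟨Ultrapower.omegaRepresentable D₁ hD₂, Ultrapower.omegaRepresentable D₂ hD₁⟩

/-- For an infinite-dimensional Banach space `X` and countably incomplete ultrafilters
`D₁`, `D₂`, the ultrapowers `(X)_{D₁}` and `(X)_{D₂}` are `ω`-equivalent. -/
theorem ultrapowers_omega_equivalent
    (X : Type*) [NormedAddCommGroup X] [NormedSpace ℝ X] [CompleteSpace X]
    (hinf : ¬ FiniteDimensional ℝ X)
    {I J : Type*} (D₁ : Ultrafilter I) (D₂ : Ultrafilter J)
    (hD₁ : CountablyIncomplete D₁) (hD₂ : CountablyIncomplete D₂) :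
    OmegaRepresentable (Ultrapower D₁ X) (Ultrapower D₂ X) ∧
      OmegaRepresentable (Ultrapower D₂ X) (Ultrapower D₁ X) :=
  ultrapowers_omega_equivalent_general X D₁ D₂ hD₁ hD₂
end
end
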